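/- arXiv:2311.06660 — 6 statements merged into one kernel-verified Lean document; each statement's English description precedes it below -/
import Mathlib

section
/- Let $0 \le \sigma_1 < \sigma/2 < \sigma_2 \le \sigma$ and $\mu_1 = \mu_2 = 1$. Define for $r > 0$ small (with $r^{2\sigma_1}+r^{2\sigma_2} > 2r^{\sigma}$) the characteristic root $\lambda_1(r) = \tfrac{1}{2}\big(-(r^{2\sigma_1}+r^{2\sigma_2}) + \sqrt{(r^{2\sigma_1}+r^{2\sigma_2})^2 - 4r^{2\sigma}}\big)$. Then $-\lambda_1(r) \sim r^{2(\sigma-\sigma_1)}$ as $r \to 0^+$, i.e. there exist constants $0 < c \le C$ and $\varepsilon > 0$ such that $c\, r^{2(\sigma-\sigma_1)} \le -\lambda_1(r) \le C\, r^{2(\sigma-\sigma_1)}$ for all $0 < r \le \varepsilon$. -/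
open Real

theorem stmt1 (σ σ1 σ2 : ℝ)
    (hσ : 1 ≤ σ) (h1 : 0 ≤ σ1) (h2 : σ1 < σ / 2) (h3 : σ / 2 < σ2) (h4 : σ2 ≤ σ) :
    ∃ c C ε : ℝ, 0 < c ∧ c ≤ C ∧ 0 < ε ∧ ∀ r : ℝ, 0 < r → r ≤ ε →
      c * r ^ (2 * (σ - σ1)) ≤
        -((1 / 2) * (-(r ^ (2 * σ1) + r ^ (2 * σ2)) +
          Real.sqrt ((r ^ (2 * σ1) + r ^ (2 * σ2)) ^ 2 - 4 * r ^ (2 * σ)))) ∧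
      -((1 / 2) * (-(r ^ (2 * σ1) + r ^ (2 * σ2)) +
          Real.sqrt ((r ^ (2 * σ1) + r ^ (2 * σ2)) ^ 2 - 4 * r ^ (2 * σ)))) ≤
        C * r ^ (2 * (σ - σ1)) := by
  set t : ℝ := 2 * σ - 4 * σ1 with ht_def
  have ht : 0 < t := by simp only [ht_def]; linarith
  refine ⟨1/2, 2, min 1 ((1/4 : ℝ) ^ t⁻¹), by norm_num, by norm_num, ?_, ?_⟩
  · exact lt_min one_pos (Real.rpow_pos_of_pos (by norm_num) _)
  intro r hr hrε
  have hr1 : r ≤ 1 := le_trans hrε (min_le_left _ _)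
  have hr2 : r ≤ (1/4 : ℝ) ^ t⁻¹ := le_trans hrε (min_le_right _ _)
  have hrt : r ^ t ≤ 1/4 := by
    have := Real.rpow_le_rpow hr.le hr2 ht.le
    rwa [← Real.rpow_mul (by norm_num), inv_mul_cancel₀ ht.ne', Real.rpow_one] at this
  set a := r ^ (2 * σ1) with ha_def
  set b := r ^ (2 * σ2) with hb_def
  set p := r ^ (2 * σ) with hp_def
  set q := r ^ (2 * (σ - σ1)) with hq_def
  have hap : 0 < a := Real.rpow_pos_of_pos hr _
  have hbp : 0 < b := Real.rpow_pos_of_pos hr _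
  have hpp : 0 < p := Real.rpow_pos_of_pos hr _
  have hqp : 0 < q := Real.rpow_pos_of_pos hr _
  have hba : b ≤ a := Real.rpow_le_rpow_of_exponent_ge hr hr1 (by linarith)
  have hpq : p = a * q := by
    rw [ha_def, hq_def, hp_def, ← Real.rpow_add hr]; ring_nf
  have hpa2 : 4 * p ≤ a ^ 2 := by
    have ha2 : a ^ 2 = r ^ (4 * σ1) := by
      rw [ha_def, ← Real.rpow_natCast (r ^ (2*σ1)) 2, ← Real.rpow_mul hr.le]
      norm_num; ring_nf
    have hps : p = r ^ (4 * σ1) * r ^ t := by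
      rw [hp_def, ← Real.rpow_add hr, ht_def]; ring_nf
    have h4 : 0 < r ^ (4 * σ1) := Real.rpow_pos_of_pos hr _
    rw [ha2, hps]
    nlinarith [hrt, h4]
  set s := a + b with hs_def
  have hs2a : s ≤ 2 * a := by simp only [hs_def]; linarith
  have hsa : a ≤ s := by simp only [hs_def]; linarith
  have hdisc : 0 ≤ s ^ 2 - 4 * p := by nlinarith
  set D := Real.sqrt (s ^ 2 - 4 * p) with hD_def
  have hD0 : 0 ≤ D := Real.sqrt_nonneg _
  have hD2 : D ^ 2 = s ^ 2 - 4 * p := Real.sq_sqrt hdisc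
  have hDs : D ≤ s := by
    nlinarith [hD2, hpp, hD0, hap, hbp]
  have hkey : (s - D) * (s + D) = 4 * p := by linear_combination -hD2
  have hspos : 0 < s + D := by positivity
  constructor
  · -- lower bound: q ≤ s - D, i.e. (1/2) q ≤ (s-D)/2
    have hlow : q ≤ s - D := by
      have hsd4 : s + D ≤ 4 * a := by linarith
      have h1 : q * (s + D) ≤ q * (4 * a) := mul_le_mul_of_nonneg_left hsd4 hqp.le
      have h2 : q * (s + D) ≤ (s - D) * (s + D) := by rw [hkey, hpq]; linarith [h1]
      exact le_of_mul_le_mul_right (by linarith [h2]) hspos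
    have : -((1/2) * (-s + D)) = (s - D) / 2 := by ring
    rw [this]; linarith
  · have hup : s - D ≤ 4 * q := by
      have h1 : (s - D) * s ≤ (s - D) * (s + D) :=
        mul_le_mul_of_nonneg_left (by linarith) (by linarith)
      have h2 : 4 * p ≤ (4 * q) * s := by
        rw [hpq]
        have := mul_le_mul_of_nonneg_left hsa (by positivity : (0:ℝ) ≤ 4 * q)
        linarith [this]
      have hspos' : 0 < s := by positivity
      have h3 : (s - D) * s ≤ (4 * q) * s := by
        calc (s - D) * s ≤ (s - D) * (s + D) := h1
        _ = 4 * p := hkey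
        _ ≤ (4 * q) * s := h2
      exact le_of_mul_le_mul_right h3 hspos'
    have : -((1/2) * (-s + D)) = (s - D) / 2 := by ring
    rw [this]; linarith
end

section
/- Let $0 \le \sigma_1 < \sigma/2 < \sigma_2 \le \sigma$ and $\mu_1 = \mu_2 = 1$. For small $r > 0$, the difference of the characteristic roots satisfies $\lambda_1(r) - \lambda_2(r) = \sqrt{(r^{2\sigma_1}+r^{2\sigma_2})^2 - 4r^{2\sigma}} \sim r^{2\sigma_1}$ as $r \to 0^+$, and for large $r$, $\lambda_1(r) - \lambda_2(r) \sim r^{2\sigma_2}$ as $r \to \infty$. -/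
open Real

lemma aux_sqrt (a b s : ℝ) (ha : 0 < a) (hba : b ≤ a) (hb : 0 ≤ b)
    (hs0 : 0 ≤ s) (hs : 8 * s ≤ a ^ 2) :
    (1/2) * a ≤ Real.sqrt ((a + b) ^ 2 - 4 * s) ∧
      Real.sqrt ((a + b) ^ 2 - 4 * s) ≤ 2 * a := by
  constructor
  · rw [show (1/2 : ℝ) * a = Real.sqrt (((1/2)*a)^2) by
      rw [Real.sqrt_sq (by positivity)]]
    apply Real.sqrt_le_sqrt
    nlinarith [sq_nonneg (a + b), sq_nonneg b, mul_nonneg hb ha.le]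
  · rw [show (2 : ℝ) * a = Real.sqrt ((2*a)^2) by rw [Real.sqrt_sq (by positivity)]]
    apply Real.sqrt_le_sqrt
    nlinarith

theorem stmt3 (σ σ1 σ2 : ℝ)
    (hσ : 1 ≤ σ) (h1 : 0 ≤ σ1) (h2 : σ1 < σ / 2) (h3 : σ / 2 < σ2) (h4 : σ2 ≤ σ) :
    (∃ c C ε : ℝ, 0 < c ∧ c ≤ C ∧ 0 < ε ∧ ∀ r : ℝ, 0 < r → r ≤ ε →
      c * r ^ (2 * σ1) ≤
        Real.sqrt ((r ^ (2 * σ1) + r ^ (2 * σ2)) ^ 2 - 4 * r ^ (2 * σ)) ∧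
      Real.sqrt ((r ^ (2 * σ1) + r ^ (2 * σ2)) ^ 2 - 4 * r ^ (2 * σ)) ≤
        C * r ^ (2 * σ1)) ∧
    (∃ c C M : ℝ, 0 < c ∧ c ≤ C ∧ 0 < M ∧ ∀ r : ℝ, M ≤ r →
      c * r ^ (2 * σ2) ≤
        Real.sqrt ((r ^ (2 * σ1) + r ^ (2 * σ2)) ^ 2 - 4 * r ^ (2 * σ)) ∧
      Real.sqrt ((r ^ (2 * σ1) + r ^ (2 * σ2)) ^ 2 - 4 * r ^ (2 * σ)) ≤
        C * r ^ (2 * σ2)) := by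
  have h12 : σ1 < σ2 := lt_trans h2 h3
  constructor
  · -- small r case
    have hδ : 0 < 2*σ - 4*σ1 := by linarith
    set ε : ℝ := min 1 ((1/8 : ℝ) ^ ((2*σ - 4*σ1)⁻¹)) with hεdef
    have hε0 : 0 < ε := lt_min one_pos (Real.rpow_pos_of_pos (by norm_num) _)
    refine ⟨1/2, 2, ε, by norm_num, by norm_num, hε0, fun r hr hrε => ?_⟩
    have hr1 : r ≤ 1 := hrε.trans (min_le_left _ _)
    have hba : r ^ (2*σ2) ≤ r ^ (2*σ1) :=
      Real.rpow_le_rpow_of_exponent_ge hr hr1 (by linarith)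
    have hkey : 8 * r ^ (2*σ) ≤ (r ^ (2*σ1)) ^ 2 := by
      have h1' : (r ^ (2*σ1)) ^ 2 = r ^ (4*σ1) := by
        rw [← Real.rpow_natCast (r ^ (2*σ1)) 2, ← Real.rpow_mul hr.le]
        norm_num; ring_nf
      have h2' : r ^ (2*σ) = r ^ (4*σ1) * r ^ (2*σ - 4*σ1) := by
        rw [← Real.rpow_add hr]; ring_nf
      have h3' : r ^ (2*σ - 4*σ1) ≤ 1/8 := by
        have := Real.rpow_le_rpow hr.le (hrε.trans (min_le_right _ _)) hδ.le
        rwa [← Real.rpow_mul (by norm_num), inv_mul_cancel₀ hδ.ne', Real.rpow_one] at this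
      have h4' : 0 ≤ r ^ (4*σ1) := (Real.rpow_pos_of_pos hr _).le
      rw [h1', h2']; nlinarith
    exact aux_sqrt _ _ _ (Real.rpow_pos_of_pos hr _) hba
      (Real.rpow_pos_of_pos hr _).le (Real.rpow_pos_of_pos hr _).le hkey
  · -- large r case
    have hδ : 0 < 4*σ2 - 2*σ := by linarith
    set M : ℝ := max 1 ((8 : ℝ) ^ ((4*σ2 - 2*σ)⁻¹)) with hMdef
    refine ⟨1/2, 2, M, by norm_num, by norm_num,
      lt_of_lt_of_le one_pos (le_max_left _ _), fun r hrM => ?_⟩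
    have hr1 : 1 ≤ r := (le_max_left _ _).trans hrM
    have hr : 0 < r := lt_of_lt_of_le one_pos hr1
    have hba : r ^ (2*σ1) ≤ r ^ (2*σ2) :=
      Real.rpow_le_rpow_of_exponent_le hr1 (by linarith)
    have hkey : 8 * r ^ (2*σ) ≤ (r ^ (2*σ2)) ^ 2 := by
      have h1' : (r ^ (2*σ2)) ^ 2 = r ^ (2*σ) * r ^ (4*σ2 - 2*σ) := by
        rw [← Real.rpow_add hr, ← Real.rpow_natCast (r ^ (2*σ2)) 2,
          ← Real.rpow_mul hr.le]
        norm_num; ring_nf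
      have h3' : (8:ℝ) ≤ r ^ (4*σ2 - 2*σ) := by
        have hM8 : (8:ℝ) ^ ((4*σ2 - 2*σ)⁻¹) ≤ r := (le_max_right _ _).trans hrM
        have := Real.rpow_le_rpow (Real.rpow_pos_of_pos (by norm_num) _).le hM8 hδ.le
        rwa [← Real.rpow_mul (by norm_num), inv_mul_cancel₀ hδ.ne', Real.rpow_one] at this
      have h4' : 0 < r ^ (2*σ) := Real.rpow_pos_of_pos hr _
      rw [h1']; nlinarith
    have := aux_sqrt (r ^ (2*σ2)) (r ^ (2*σ1)) (r ^ (2*σ)) (Real.rpow_pos_of_pos hr _)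
      hba (Real.rpow_pos_of_pos hr _).le (Real.rpow_pos_of_pos hr _).le hkey
    rw [add_comm] at this
    exact this
end

section
/- Let $0 \le \sigma_1 < \sigma/2 < \sigma_2 \le \sigma$ with $\sigma_1 + \sigma_2 > \sigma$, and $\mu_1 = \mu_2 = 1$. For small $r > 0$ define $\lambda_1(r) = \tfrac{1}{2}\big(-(r^{2\sigma_1}+r^{2\sigma_2}) + \sqrt{(r^{2\sigma_1}+r^{2\sigma_2})^2 - 4r^{2\sigma}}\big)$. Then there exist $C > 0$ and $\varepsilon > 0$ such that $\big|-\lambda_1(r) - r^{2(\sigma-\sigma_1)}\big| \le C\, r^{2(2\sigma - 3\sigma_1)}$ for all $0 < r \le \varepsilon$. -/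
open Real

set_option maxHeartbeats 800000

theorem stmt7 (σ σ1 σ2 : ℝ)
    (hσ : 1 ≤ σ) (h1 : 0 ≤ σ1) (h2 : σ1 < σ / 2) (h3 : σ / 2 < σ2) (h4 : σ2 ≤ σ)
    (hsum : σ1 + σ2 > σ) :
    ∃ C ε : ℝ, 0 < C ∧ 0 < ε ∧ ∀ r : ℝ, 0 < r → r ≤ ε →
      |-((1 / 2) * (-(r ^ (2 * σ1) + r ^ (2 * σ2)) +
          Real.sqrt ((r ^ (2 * σ1) + r ^ (2 * σ2)) ^ 2 - 4 * r ^ (2 * σ)))) -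
        r ^ (2 * (σ - σ1))| ≤ C * r ^ (2 * (2 * σ - 3 * σ1)) := by
  have hes : 0 < 2 * (σ - 2 * σ1) := by linarith
  set e : ℝ := 2 * (σ - 2 * σ1) with he_def
  refine ⟨2, min 1 ((1/8 : ℝ) ^ e⁻¹), by norm_num,
    lt_min one_pos (Real.rpow_pos_of_pos (by norm_num) _), ?_⟩
  intro r hr hrε
  have hr1 : r ≤ 1 := le_trans hrε (min_le_left _ _)
  have hre : r ^ e ≤ 1/8 := by
    calc r ^ e ≤ ((1/8 : ℝ) ^ e⁻¹) ^ e :=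
          Real.rpow_le_rpow hr.le (le_trans hrε (min_le_right _ _)) hes.le
      _ = 1/8 := by
          rw [← Real.rpow_mul (by norm_num : (0:ℝ) ≤ 1/8), inv_mul_cancel₀ hes.ne',
            Real.rpow_one]
  set x : ℝ := r ^ (2 * σ1) with hx_def
  set y : ℝ := r ^ (2 * σ2) with hy_def
  set b : ℝ := r ^ (2 * σ) with hb_def
  set p : ℝ := r ^ (2 * (σ - σ1)) with hp_def
  set T : ℝ := r ^ (2 * (2 * σ - 3 * σ1)) with hT_def
  have hx : 0 < x := Real.rpow_pos_of_pos hr _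
  have hy : 0 < y := Real.rpow_pos_of_pos hr _
  have hp : 0 < p := Real.rpow_pos_of_pos hr _
  have hT : 0 < T := Real.rpow_pos_of_pos hr _
  have hre0 : 0 < r ^ e := Real.rpow_pos_of_pos hr _
  have hb : x * p = b := by
    rw [hx_def, hp_def, hb_def, ← Real.rpow_add hr]
    ring_nf
  have hpe : x * r ^ e = p := by
    rw [hx_def, hp_def, ← Real.rpow_add hr, he_def]
    ring_nf
  have hbe : x * x * r ^ e = b := by
    rw [hx_def, hb_def, ← Real.rpow_add hr, ← Real.rpow_add hr, he_def]
    ring_nf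
  have hpT : p * p = x * T := by
    rw [hx_def, hp_def, hT_def, ← Real.rpow_add hr, ← Real.rpow_add hr]
    ring_nf
  have hyp : y ≤ p := by
    rw [hy_def, hp_def]
    exact Real.rpow_le_rpow_of_exponent_ge hr hr1 (by linarith)
  have hp8 : p ≤ x / 8 := by
    rw [← hpe]
    nlinarith
  have hb8 : b ≤ x * x / 8 := by
    rw [← hbe]
    nlinarith
  have hdisc : x * x / 2 ≤ (x + y) ^ 2 - 4 * b := by
    nlinarith [hb8, mul_pos hx hy, sq_nonneg y]
  have hdisc0 : 0 ≤ (x + y) ^ 2 - 4 * b := by nlinarith [mul_pos hx hx]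
  set s : ℝ := Real.sqrt ((x + y) ^ 2 - 4 * b) with hs_def
  have hs0 : 0 ≤ s := Real.sqrt_nonneg _
  have hs2 : s ^ 2 = (x + y) ^ 2 - 4 * b := Real.sq_sqrt hdisc0
  have hs : x / 2 ≤ s := by
    rw [hs_def]
    rw [show (x / 2) = Real.sqrt ((x / 2) ^ 2) from (Real.sqrt_sq (by positivity)).symm]
    exact Real.sqrt_le_sqrt (by nlinarith)
  have hD : x ≤ x + y - 2 * p + s := by linarith
  have hDpos : 0 < x + y - 2 * p + s := lt_of_lt_of_le hx hD
  have hND : (x + y - 2 * p - s) * (x + y - 2 * p + s) = 4 * p * (p - y) := by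
    have h : (x + y - 2 * p - s) * (x + y - 2 * p + s) = (x + y - 2 * p) ^ 2 - s ^ 2 := by
      ring
    rw [h, hs2, ← hb]
    ring
  have h4p : 0 ≤ 4 * p * (p - y) := by nlinarith
  have hN0 : 0 ≤ x + y - 2 * p - s := by
    by_contra hc
    push_neg at hc
    nlinarith [mul_pos (neg_pos.mpr hc) hDpos]
  have hN4 : x + y - 2 * p - s ≤ 4 * T := by
    have key : (x + y - 2 * p - s) * (x + y - 2 * p + s) ≤ 4 * T * (x + y - 2 * p + s) := by
      rw [hND]
      have a1 : 4 * p * (p - y) ≤ 4 * (x * T) := by nlinarith [hpT, mul_nonneg hp.le hy.le]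
      have a2 : 4 * (x * T) ≤ 4 * T * (x + y - 2 * p + s) := by
        nlinarith [mul_le_mul_of_nonneg_left hD hT.le]
      linarith
    exact le_of_mul_le_mul_right key hDpos
  have hgoal : -((1 / 2) * (-(x + y) + s)) - p = (x + y - 2 * p - s) / 2 := by ring
  rw [hgoal, abs_of_nonneg (by linarith)]
  linarith
end

section
/- Let $0 \le \sigma_1 < \sigma/2 < \sigma_2 \le \sigma$ with $\sigma_1 + \sigma_2 \le \sigma$, and $\mu_1 = \mu_2 = 1$. For small $r > 0$ define $\lambda_1(r)$ as the larger root of $\lambda^2 + (r^{2\sigma_1}+r^{2\sigma_2})\lambda + r^{2\sigma} = 0$. Then there exist $C > 0$ and $\varepsilon > 0$ such that $\big|-\lambda_1(r) - r^{2(\sigma-\sigma_1)}\big| \le C\, r^{2(\sigma + \sigma_2 - 2\sigma_1)}$ for all $0 < r \le \varepsilon$. -/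
set_option maxHeartbeats 1000000


open Real

theorem stmt8 (σ σ1 σ2 : ℝ)
    (hσ : 1 ≤ σ) (h1 : 0 ≤ σ1) (h2 : σ1 < σ / 2) (h3 : σ / 2 < σ2) (h4 : σ2 ≤ σ)
    (hsum : σ1 + σ2 ≤ σ) :
    ∃ C ε : ℝ, 0 < C ∧ 0 < ε ∧ ∀ r : ℝ, 0 < r → r ≤ ε →
      |-((1 / 2) * (-(r ^ (2 * σ1) + r ^ (2 * σ2)) +
          Real.sqrt ((r ^ (2 * σ1) + r ^ (2 * σ2)) ^ 2 - 4 * r ^ (2 * σ)))) -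
        r ^ (2 * (σ - σ1))| ≤ C * r ^ (2 * (σ + σ2 - 2 * σ1)) := by
  set δ := 2*σ - 4*σ1 with hδdef
  have hδ : 0 < δ := by simp only [hδdef]; linarith
  refine ⟨8, min 1 ((1/8 : ℝ) ^ δ⁻¹), by norm_num,
    lt_min one_pos (Real.rpow_pos_of_pos (by norm_num) _), ?_⟩
  intro r hr hrε
  have hr1 : r ≤ 1 := hrε.trans (min_le_left _ _)
  have hrd : r ^ δ ≤ 1/8 := by
    calc r ^ δ ≤ ((1/8:ℝ) ^ δ⁻¹) ^ δ :=
          Real.rpow_le_rpow hr.le (hrε.trans (min_le_right _ _)) hδ.le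
      _ = 1/8 := by
          rw [← Real.rpow_mul (by norm_num : (0:ℝ) ≤ 1/8), inv_mul_cancel₀ hδ.ne',
            Real.rpow_one]
  set a := r ^ (2*σ1) with ha_def
  set b := r ^ (2*σ2) with hb_def
  set p := r ^ (2*σ) with hp_def
  have ha : 0 < a := Real.rpow_pos_of_pos hr _
  have hb : 0 < b := Real.rpow_pos_of_pos hr _
  have hp : 0 < p := Real.rpow_pos_of_pos hr _
  have hba : b ≤ a := Real.rpow_le_rpow_of_exponent_ge hr hr1 (by linarith)
  have hpab : p ≤ a * b := by
    rw [ha_def, hb_def, hp_def, ← Real.rpow_add hr]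
    exact Real.rpow_le_rpow_of_exponent_ge hr hr1 (by linarith)
  have ha2 : a ^ 2 = r ^ (4*σ1) := by
    rw [ha_def, sq, ← Real.rpow_add hr]; congr 1; ring
  have h8p : 8 * p ≤ a ^ 2 := by
    have hpe : p = r ^ (4*σ1) * r ^ δ := by
      rw [hp_def, ← Real.rpow_add hr]; congr 1; simp only [hδdef]; ring
    have h4p : 0 < r ^ (4*σ1) := Real.rpow_pos_of_pos hr _
    rw [ha2, hpe]; nlinarith
  set s := Real.sqrt ((a+b)^2 - 4*p) with hs_def
  have hd0 : 0 ≤ (a+b)^2 - 4*p := by nlinarith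
  have hs2 : s^2 = (a+b)^2 - 4*p := Real.sq_sqrt hd0
  have hsnn : 0 ≤ s := Real.sqrt_nonneg _
  have hs_half : a/2 ≤ s := by nlinarith [hs2, sq_nonneg (s - a/2), sq_nonneg (s + a/2)]
  have hs_ab : a - b ≤ s := by nlinarith [hs2, sq_nonneg (s - (a-b)), sq_nonneg (s + (a-b))]
  have key : (s-(a-b)) * (s+(a-b)) = 4*(a*b - p) := by linear_combination hs2
  have hA : s - (a - b) ≤ 8 * b := by
    have h5 : a/2 ≤ s + (a-b) := by linarith
    have h6 : (s-(a-b)) * (a/2) ≤ (s-(a-b)) * (s+(a-b)) :=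
      mul_le_mul_of_nonneg_left h5 (by linarith)
    nlinarith [key, hp.le, mul_pos ha hb]
  have hane : a ≠ 0 := ha.ne'
  have habs : (0:ℝ) < a + b + s := by positivity
  have heq : p/a - (a+b-s)/2 = p*(s-(a-b))/(a*(a+b+s)) := by
    rw [div_sub_div _ _ hane (two_ne_zero), div_eq_div_iff (by positivity) (by positivity)]
    linear_combination (a^2) * hs2
  have hub : p*(s-(a-b))/(a*(a+b+s)) ≤ p*(8*b)/(a*a) := by
    apply div_le_div₀ (by positivity)
      (mul_le_mul_of_nonneg_left hA hp.le) (by positivity)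
    nlinarith
  have hdn : 0 ≤ p/a - (a+b-s)/2 := by
    rw [heq]
    exact div_nonneg (mul_nonneg hp.le (by linarith)) (by positivity)
  have hT : r ^ (2*(σ-σ1)) = p/a := by
    rw [hp_def, ha_def, ← Real.rpow_sub hr]; congr 1; ring
  have hRHS : r ^ (2*(σ+σ2-2*σ1)) = p*b/a^2 := by
    rw [hp_def, hb_def, ha2, ← Real.rpow_add hr, ← Real.rpow_sub hr]; congr 1; ring
  rw [hT, hRHS]
  have hre : -((1/2) * (-(a+b) + s)) - p/a = -(p/a - (a+b-s)/2) := by ring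
  rw [hre, abs_neg, abs_of_nonneg hdn, heq]
  calc p*(s-(a-b))/(a*(a+b+s)) ≤ p*(8*b)/(a*a) := hub
    _ = 8 * (p*b/a^2) := by field_simp
end

section
/- Let $a > 0$, $\alpha > 0$, $\beta > 0$, and let $h \in L^1(\mathbb{R}^n)$, and let $\phi(t, \cdot)$ be smooth functions satisfying $\||D|^a \phi(t,\cdot)\|_{L^2} \le C t^{-\alpha}$ and $\||D|^{a+1}\phi(t,\cdot)\|_{L^2} \le C t^{-\alpha-\beta}$ for all $t \ge 1$. Then $\Big\||D|^a\Big(\phi(t,\cdot) * h - \big(\int_{\mathbb{R}^n} h(y)\,dy\big)\phi(t,\cdot)\Big)\Big\|_{L^2} = o(t^{-\alpha})$ as $t \to \infty$. -/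
open MeasureTheory Real Filter Asymptotics
open scoped FourierTransform

set_option maxHeartbeats 1000000 in
lemma aesm_fourier {n : ℕ} (f : EuclideanSpace ℝ (Fin n) → ℂ) :
    AEStronglyMeasurable (𝓕 f) volume := by
  by_cases hint : Integrable f
  · exact (VectorFourier.fourierIntegral_continuous Real.continuous_fourierChar
      (by exact continuous_inner) hint).aestronglyMeasurable
  · have : 𝓕 f = 0 := by
      ext w
      rw [Real.fourier_eq]
      apply integral_undef
      intro hc
      exact hint ((Real.fourierIntegral_convergent_iff w).1 hc)
    rw [this]
    exact aestronglyMeasurable_const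

theorem stmt16 (n : ℕ) (a α β C : ℝ) (ha : 0 < a) (hα : 0 < α) (hβ : 0 < β)
    (h : EuclideanSpace ℝ (Fin n) → ℂ) (hh : Integrable h)
    (φ : ℝ → EuclideanSpace ℝ (Fin n) → ℂ)
    (hφ1 : ∀ t : ℝ, 1 ≤ t →
      eLpNorm (fun ξ => ((‖ξ‖ ^ a : ℝ) : ℂ) * 𝓕 (φ t) ξ) 2 volume ≤
        ENNReal.ofReal (C * t ^ (-α)))
    (hφ2 : ∀ t : ℝ, 1 ≤ t →
      eLpNorm (fun ξ => ((‖ξ‖ ^ (a + 1) : ℝ) : ℂ) * 𝓕 (φ t) ξ) 2 volume ≤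
        ENNReal.ofReal (C * t ^ (-α - β))) :
    (fun t : ℝ =>
        (eLpNorm (fun ξ => ((‖ξ‖ ^ a : ℝ) : ℂ) *
          (𝓕 (φ t) ξ * 𝓕 h ξ - (∫ y, h y) * 𝓕 (φ t) ξ)) 2 volume).toReal)
      =o[atTop] fun t : ℝ => t ^ (-α) := by
  set M : ℂ := ∫ y, h y with hM
  have hFc : Continuous (𝓕 h) := VectorFourier.fourierIntegral_continuous
    Real.continuous_fourierChar (by exact continuous_inner) hh
  have hF0 : 𝓕 h 0 = M := by
    rw [Real.fourier_eq]
    simp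
    rfl
  set K : ℝ := ∫ y, ‖h y‖ with hK
  have hK0 : 0 ≤ K := integral_nonneg fun y => norm_nonneg _
  have hFb : ∀ ξ, ‖𝓕 h ξ - M‖ ≤ 2 * K := by
    intro ξ
    have h1 : ‖𝓕 h ξ‖ ≤ K :=
      VectorFourier.norm_fourierIntegral_le_integral_norm _ _ _ _ _
    have h2 : ‖M‖ ≤ K := norm_integral_le_integral_norm _
    calc ‖𝓕 h ξ - M‖ ≤ ‖𝓕 h ξ‖ + ‖M‖ := norm_sub_le _ _
      _ ≤ 2 * K := by linarith
  set C' : ℝ := max C 0 with hC'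
  have hC'0 : 0 ≤ C' := le_max_right _ _
  rw [isLittleO_iff]
  intro c hc
  set δ : ℝ := c / (2 * (C' + 1)) with hδdef
  have hδ0 : 0 < δ := by positivity
  obtain ⟨ε, hε0, hεs⟩ : ∃ ε > (0:ℝ), ∀ ξ : EuclideanSpace ℝ (Fin n),
      ‖ξ‖ ≤ ε → ‖𝓕 h ξ - M‖ ≤ δ := by
    obtain ⟨ε, hε0, hε⟩ := Metric.continuousAt_iff.mp (hFc.continuousAt (x := 0)) δ hδ0
    refine ⟨ε / 2, by positivity, fun ξ hξ => ?_⟩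
    have := hε (x := ξ) (by rw [dist_zero_right]; linarith)
    rw [hF0, dist_eq_norm] at this
    exact this.le
  set B : ℝ := 2 * K / ε with hB
  have hB0 : 0 ≤ B := by positivity
  -- eventual smallness of t ^ (-β)
  have hsmall : ∀ᶠ t : ℝ in atTop, t ^ (-β) ≤ (c / 2) / (B * C' + 1) := by
    have := (tendsto_rpow_neg_atTop hβ).eventually_le_const
      (show (0:ℝ) < (c / 2) / (B * C' + 1) by positivity)
    exact this
  filter_upwards [eventually_ge_atTop (1:ℝ), hsmall] with t ht1 hts
  have ht0 : (0:ℝ) < t := lt_of_lt_of_le one_pos ht1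
  have htα : 0 ≤ t ^ (-α) := Real.rpow_nonneg ht0.le _
  -- pointwise bound
  set G := 𝓕 (φ t) with hG
  have hGm : AEStronglyMeasurable G volume := aesm_fourier (φ t)
  have hnorm_a : Continuous fun ξ : EuclideanSpace ℝ (Fin n) => ((‖ξ‖ ^ a : ℝ) : ℂ) :=
    Complex.continuous_ofReal.comp (continuous_norm.rpow_const fun x => Or.inr ha.le)
  have hnorm_a1 : Continuous fun ξ : EuclideanSpace ℝ (Fin n) => ((‖ξ‖ ^ (a+1) : ℝ) : ℂ) :=
    Complex.continuous_ofReal.comp (continuous_norm.rpow_const fun x => Or.inr (by linarith))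
  set f1 : EuclideanSpace ℝ (Fin n) → ℂ := fun ξ => ((‖ξ‖ ^ a : ℝ) : ℂ) * G ξ with hf1
  set f2 : EuclideanSpace ℝ (Fin n) → ℂ := fun ξ => ((‖ξ‖ ^ (a+1) : ℝ) : ℂ) * G ξ with hf2
  have hf1m : AEStronglyMeasurable f1 volume := hnorm_a.aestronglyMeasurable.mul hGm
  have hf2m : AEStronglyMeasurable f2 volume := hnorm_a1.aestronglyMeasurable.mul hGm
  have hpt : ∀ ξ, ‖((‖ξ‖ ^ a : ℝ) : ℂ) * (G ξ * 𝓕 h ξ - M * G ξ)‖ ≤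
      (δ • fun ξ => ‖f1 ξ‖) ξ + (B • fun ξ => ‖f2 ξ‖) ξ := by
    intro ξ
    have hrw : G ξ * 𝓕 h ξ - M * G ξ = G ξ * (𝓕 h ξ - M) := by ring
    have hna : 0 ≤ ‖ξ‖ ^ a := Real.rpow_nonneg (norm_nonneg _) _
    have hlhs : ‖((‖ξ‖ ^ a : ℝ) : ℂ) * (G ξ * 𝓕 h ξ - M * G ξ)‖ =
        ‖f1 ξ‖ * ‖𝓕 h ξ - M‖ := by
      rw [hrw, hf1]
      simp [norm_mul, mul_assoc]
    rw [hlhs]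
    simp only [Pi.smul_apply, smul_eq_mul]
    rcases le_or_gt ‖ξ‖ ε with hle | hgt
    · have h1 : ‖f1 ξ‖ * ‖𝓕 h ξ - M‖ ≤ ‖f1 ξ‖ * δ :=
        mul_le_mul_of_nonneg_left (hεs ξ hle) (norm_nonneg _)
      have h2 : 0 ≤ B * ‖f2 ξ‖ := mul_nonneg hB0 (norm_nonneg _)
      nlinarith [norm_nonneg (f1 ξ)]
    · have hξ0 : 0 < ‖ξ‖ := lt_trans hε0 hgt
      have hsplit : ‖ξ‖ ^ (a + 1) = ‖ξ‖ ^ a * ‖ξ‖ := by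
        rw [Real.rpow_add_one (ne_of_gt hξ0)]
      have hnf1 : ‖f1 ξ‖ = ‖ξ‖ ^ a * ‖G ξ‖ := by
        rw [hf1]; simp [norm_mul, abs_of_nonneg hna]
      have hnf2 : ‖f2 ξ‖ = ‖ξ‖ ^ (a+1) * ‖G ξ‖ := by
        rw [hf2]; simp [norm_mul, abs_of_nonneg (Real.rpow_nonneg (norm_nonneg ξ) (a+1))]
      have hFbd : ‖𝓕 h ξ - M‖ ≤ B * ‖ξ‖ := by
        have : 2 * K = B * ε := by rw [hB, div_mul_cancel₀ _ hε0.ne']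
        calc ‖𝓕 h ξ - M‖ ≤ 2 * K := hFb ξ
          _ = B * ε := this
          _ ≤ B * ‖ξ‖ := mul_le_mul_of_nonneg_left hgt.le hB0
      have h1 : ‖f1 ξ‖ * ‖𝓕 h ξ - M‖ ≤ ‖f1 ξ‖ * (B * ‖ξ‖) :=
        mul_le_mul_of_nonneg_left hFbd (norm_nonneg _)
      have h2 : ‖f1 ξ‖ * (B * ‖ξ‖) = B * ‖f2 ξ‖ := by
        rw [hnf1, hnf2, hsplit]; ring
      have h3 : 0 ≤ δ * ‖f1 ξ‖ := mul_nonneg hδ0.le (norm_nonneg _)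
      linarith
  -- eLpNorm bound
  have hle1 : eLpNorm (fun ξ => ((‖ξ‖ ^ a : ℝ) : ℂ) *
      (G ξ * 𝓕 h ξ - M * G ξ)) 2 volume ≤
      eLpNorm ((δ • fun ξ => ‖f1 ξ‖) + (B • fun ξ => ‖f2 ξ‖)) 2 volume :=
    eLpNorm_mono_real hpt
  have hm1 : AEStronglyMeasurable (δ • fun ξ => ‖f1 ξ‖) volume :=
    (hf1m.norm.const_smul δ)
  have hm2 : AEStronglyMeasurable (B • fun ξ => ‖f2 ξ‖) volume :=
    (hf2m.norm.const_smul B)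
  have hle2 : eLpNorm ((δ • fun ξ => ‖f1 ξ‖) + (B • fun ξ => ‖f2 ξ‖)) 2 volume ≤
      eLpNorm (δ • fun ξ => ‖f1 ξ‖) 2 volume + eLpNorm (B • fun ξ => ‖f2 ξ‖) 2 volume :=
    eLpNorm_add_le hm1 hm2 one_le_two
  have he1 : eLpNorm (δ • fun ξ => ‖f1 ξ‖) 2 volume ≤
      ENNReal.ofReal δ * ENNReal.ofReal (C' * t ^ (-α)) := by
    rw [eLpNorm_const_smul, eLpNorm_norm,
      Real.enorm_eq_ofReal hδ0.le]
    refine mul_le_mul_right ((hφ1 t ht1).trans (ENNReal.ofReal_le_ofReal ?_)) _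
    exact mul_le_mul_of_nonneg_right (le_max_left _ _) htα
  have he2 : eLpNorm (B • fun ξ => ‖f2 ξ‖) 2 volume ≤
      ENNReal.ofReal B * ENNReal.ofReal (C' * t ^ (-α - β)) := by
    rw [eLpNorm_const_smul, eLpNorm_norm,
      Real.enorm_eq_ofReal hB0]
    refine mul_le_mul_right ((hφ2 t ht1).trans (ENNReal.ofReal_le_ofReal ?_)) _
    exact mul_le_mul_of_nonneg_right (le_max_left _ _) (Real.rpow_nonneg ht0.le _)
  have htot : eLpNorm (fun ξ => ((‖ξ‖ ^ a : ℝ) : ℂ) *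
      (G ξ * 𝓕 h ξ - M * G ξ)) 2 volume ≤
      ENNReal.ofReal (δ * (C' * t ^ (-α)) + B * (C' * t ^ (-α - β))) := by
    rw [ENNReal.ofReal_add (by positivity) (by positivity),
      ENNReal.ofReal_mul hδ0.le, ENNReal.ofReal_mul hB0]
    exact hle1.trans (hle2.trans (add_le_add he1 he2))
  have hreal : (eLpNorm (fun ξ => ((‖ξ‖ ^ a : ℝ) : ℂ) *
      (G ξ * 𝓕 h ξ - M * G ξ)) 2 volume).toReal ≤
      δ * (C' * t ^ (-α)) + B * (C' * t ^ (-α - β)) :=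
    ENNReal.toReal_le_of_le_ofReal (by positivity) htot
  -- final arithmetic
  have hsplitt : t ^ (-α - β) = t ^ (-α) * t ^ (-β) := by
    rw [← Real.rpow_add ht0]; ring_nf
  have harith : δ * (C' * t ^ (-α)) + B * (C' * t ^ (-α - β)) ≤ c * t ^ (-α) := by
    rw [hsplitt]
    have h1 : δ * C' ≤ c / 2 := by
      rw [hδdef]
      rw [div_mul_eq_mul_div, div_le_div_iff₀ (by positivity) (by norm_num)]
      nlinarith
    have h2 : B * C' * t ^ (-β) ≤ c / 2 := by
      have hb1 : B * C' * t ^ (-β) ≤ (B * C' + 1) * t ^ (-β) :=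
        mul_le_mul_of_nonneg_right (by linarith [mul_nonneg hB0 hC'0])
          (Real.rpow_nonneg ht0.le _)
      have hb2 : (B * C' + 1) * t ^ (-β) ≤ (B * C' + 1) * ((c / 2) / (B * C' + 1)) :=
        mul_le_mul_of_nonneg_left hts (by positivity)
      have hb3 : (B * C' + 1) * ((c / 2) / (B * C' + 1)) = c / 2 := by
        field_simp
      linarith
    nlinarith [htα, mul_nonneg (mul_nonneg hB0 hC'0) (Real.rpow_nonneg ht0.le (-β))]
  rw [Real.norm_eq_abs, abs_of_nonneg ENNReal.toReal_nonneg,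
    Real.norm_eq_abs, abs_of_nonneg htα]
  exact hreal.trans harith
end

section
/- Let $0 \le \sigma_1 < \sigma/2 < \sigma_2 \le \sigma$, $\mu_1 = \mu_2 = 1$, and for small $r > 0$ let $\lambda_1(r) > \lambda_2(r)$ be the roots of $\lambda^2 + (r^{2\sigma_1} + r^{2\sigma_2})\lambda + r^{2\sigma} = 0$. Then as $r \to 0^+$: $1 - \frac{r^{2\sigma_1}}{\lambda_1(r) - \lambda_2(r)} \sim -r^{2(\sigma - 2\sigma_1)}$ if $\sigma_1 + \sigma_2 > \sigma$, and $1 - \frac{r^{2\sigma_1}}{\lambda_1(r) - \lambda_2(r)} \sim r^{2(\sigma_2 - \sigma_1)}$ if $\sigma_1 + \sigma_2 < \sigma$ (where $f \sim g$ means $f/g \to $ a positive constant, or bounded above and below by positive multiples of $g$, for small $r$). -/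
private lemma key1 (s u w : ℝ) (hs : 0 < s) (hs8 : s ≤ 1/8)
    (hu_lb : 3*s ≤ u) (hu_ub : u ≤ 4*s)
    (hw2 : w^2 = 1-u) (hw0 : 0 ≤ w) :
    1 * s ≤ -(1 - 1/w) ∧ -(1 - 1/w) ≤ 8 * s := by
  have hu0 : 0 ≤ u := by linarith
  have hu_half : u ≤ 1/2 := by linarith
  have h1u : (0:ℝ) < 1 - u := by linarith
  have hwpos : 0 < w := by nlinarith
  have hw1 : w ≤ 1 := by nlinarith
  have hwlb : 1/2 ≤ w := by nlinarith
  constructor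
  · have hx2 : (w*(1+u/2))^2 = (1-u)*(1+u/2)^2 := by rw [mul_pow, hw2]
    have hxpos : 0 ≤ w*(1+u/2) := by positivity
    have hkey : w * (1 + u/2) ≤ 1 := by
      nlinarith [hx2, hxpos, sq_nonneg u, mul_nonneg (mul_nonneg hu0 hu0) hu0]
    have h2 : 1 + u/2 ≤ 1/w := by
      rw [le_div_iff₀ hwpos]; linarith [mul_comm w (1 + u/2)]
    nlinarith
  · have hwge : 1 - u ≤ w := by nlinarith
    have hkey : 1 ≤ (1 + 8*s) * w := by
      nlinarith [mul_le_mul_of_nonneg_left hwge (by linarith : (0:ℝ) ≤ 1+8*s),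
        mul_nonneg hs.le hs.le, mul_nonneg hs.le hu0]
    have h2 : 1/w ≤ 1 + 8*s := by
      rw [div_le_iff₀ hwpos]; linarith
    linarith

private lemma key2 (t v w : ℝ) (ht : 0 < t) (ht1 : t ≤ 1)
    (hv_lb : 3*t/2 ≤ v) (hv_ub : v ≤ 3*t)
    (hw2 : w^2 = 1+v) (hw0 : 0 ≤ w) :
    1/4 * t ≤ 1 - 1/w ∧ 1 - 1/w ≤ 3/2 * t := by
  have hv0 : 0 ≤ v := by linarith
  have hv3 : v ≤ 3 := by linarith
  have hwpos : 0 < w := by nlinarith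
  have hw_ge1 : 1 ≤ w := by nlinarith
  have hw_ub : w ≤ 1 + 3*t/2 := by nlinarith [sq_nonneg t, sq_nonneg (w - 1 - 3*t/2)]
  have hw_lb : 1 + t/2 ≤ w := by nlinarith [sq_nonneg (w - 1 - t/2)]
  constructor
  · have hkey : (1 - t/4) * w ≥ 1 := by
      nlinarith [mul_le_mul_of_nonneg_left hw_lb (by linarith : (0:ℝ) ≤ 1-t/4),
        mul_nonneg ht.le ht.le]
    have h2 : 1/w ≤ 1 - t/4 := by
      rw [div_le_iff₀ hwpos]; linarith
    linarith
  · have htw : t ≤ t*w := by nlinarith [mul_le_mul_of_nonneg_left hw_ge1 ht.le]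
    have hkey : (1 - 3*t/2) * w ≤ 1 := by nlinarith [htw, hw_ub]
    have h2 : 1 - 3*t/2 ≤ 1/w := by
      rw [le_div_iff₀ hwpos]; linarith
    linarith

open Real

private lemma rpow_small (γ δ : ℝ) (hγ : 0 < γ) (hδ : 0 < δ) :
    ∃ ε : ℝ, 0 < ε ∧ ε ≤ 1 ∧ ∀ r : ℝ, 0 < r → r ≤ ε → r ^ γ ≤ δ := by
  have hm : (0:ℝ) < min δ 1 := lt_min hδ one_pos
  refine ⟨min 1 (min δ 1 ^ γ⁻¹), lt_min one_pos (Real.rpow_pos_of_pos hm _),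
    min_le_left _ _, ?_⟩
  intro r hr hrε
  calc r ^ γ ≤ (min δ 1 ^ γ⁻¹) ^ γ :=
        Real.rpow_le_rpow hr.le (hrε.trans (min_le_right _ _)) hγ.le
    _ = min δ 1 := by
        rw [← Real.rpow_mul hm.le, inv_mul_cancel₀ hγ.ne', Real.rpow_one]
    _ ≤ δ := min_le_left _ _


set_option maxHeartbeats 800000 in

open Real

theorem stmt18 (σ σ1 σ2 : ℝ)
    (hσ : 1 ≤ σ) (h1 : 0 ≤ σ1) (h2 : σ1 < σ / 2) (h3 : σ / 2 < σ2) (h4 : σ2 ≤ σ) :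
    (σ1 + σ2 > σ →
      ∃ c C ε : ℝ, 0 < c ∧ c ≤ C ∧ 0 < ε ∧ ∀ r : ℝ, 0 < r → r ≤ ε →
        c * r ^ (2 * (σ - 2 * σ1)) ≤
          -(1 - r ^ (2 * σ1) /
            Real.sqrt ((r ^ (2 * σ1) + r ^ (2 * σ2)) ^ 2 - 4 * r ^ (2 * σ))) ∧
        -(1 - r ^ (2 * σ1) /
            Real.sqrt ((r ^ (2 * σ1) + r ^ (2 * σ2)) ^ 2 - 4 * r ^ (2 * σ))) ≤
          C * r ^ (2 * (σ - 2 * σ1))) ∧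
    (σ1 + σ2 < σ →
      ∃ c C ε : ℝ, 0 < c ∧ c ≤ C ∧ 0 < ε ∧ ∀ r : ℝ, 0 < r → r ≤ ε →
        c * r ^ (2 * (σ2 - σ1)) ≤
          1 - r ^ (2 * σ1) /
            Real.sqrt ((r ^ (2 * σ1) + r ^ (2 * σ2)) ^ 2 - 4 * r ^ (2 * σ)) ∧
        1 - r ^ (2 * σ1) /
            Real.sqrt ((r ^ (2 * σ1) + r ^ (2 * σ2)) ^ 2 - 4 * r ^ (2 * σ)) ≤
          C * r ^ (2 * (σ2 - σ1))) := by
  constructor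
  · -- Case 1 : σ1 + σ2 > σ
    intro hgt
    obtain ⟨ε1, hε1, hε1le, hQ1⟩ := rpow_small (2*(σ1+σ2-σ)) (1/4) (by linarith) (by norm_num)
    obtain ⟨ε2, hε2, hε2le, hQ2⟩ := rpow_small (4*σ2-2*σ) (1/4) (by linarith) (by norm_num)
    obtain ⟨ε3, hε3, hε3le, hQ3⟩ := rpow_small (2*(σ-2*σ1)) (1/8) (by linarith) (by norm_num)
    refine ⟨1, 8, min ε1 (min ε2 ε3), one_pos, by norm_num, lt_min hε1 (lt_min hε2 hε3), ?_⟩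
    intro r hr hrε
    have hr1 : r ≤ ε1 := hrε.trans (min_le_left _ _)
    have hr2 : r ≤ ε2 := hrε.trans ((min_le_right _ _).trans (min_le_left _ _))
    have hr3 : r ≤ ε3 := hrε.trans ((min_le_right _ _).trans (min_le_right _ _))
    set a := r ^ (2*σ1) with ha_def
    set s := r ^ (2*(σ-2*σ1)) with hs_def
    set t := r ^ (2*(σ2-σ1)) with ht_def
    have ha : 0 < a := Real.rpow_pos_of_pos hr _
    have hs : 0 < s := Real.rpow_pos_of_pos hr _
    have ht : 0 < t := Real.rpow_pos_of_pos hr _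
    have hts : t ≤ s/4 := by
      have h' : t = s * r ^ (2*(σ1+σ2-σ)) := by
        rw [ht_def, hs_def, ← Real.rpow_add hr]; ring_nf
      have h'' := mul_le_mul_of_nonneg_left (hQ1 r hr hr1) hs.le
      rw [h']; linarith
    have ht2s : t^2 ≤ s/4 := by
      have h' : t^2 = s * r ^ (4*σ2-2*σ) := by
        rw [ht_def, hs_def, sq, ← Real.rpow_add hr, ← Real.rpow_add hr]; ring_nf
      have h'' := mul_le_mul_of_nonneg_left (hQ2 r hr hr2) hs.le
      rw [h']; linarith
    have hs8 : s ≤ 1/8 := hQ3 r hr hr3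
    set u := 4*s - 2*t - t^2 with hu_def
    have hu_lb : 3*s ≤ u := by rw [hu_def]; linarith
    have hu_ub : u ≤ 4*s := by rw [hu_def]; nlinarith [sq_nonneg t, ht.le]
    have h1u : (0:ℝ) < 1 - u := by linarith
    have hb : r ^ (2*σ2) = a * t := by
      rw [ha_def, ht_def, ← Real.rpow_add hr]; ring_nf
    have hd : r ^ (2*σ) = a^2 * s := by
      rw [ha_def, hs_def, sq, ← Real.rpow_add hr, ← Real.rpow_add hr]; ring_nf
    have hD : (a + r ^ (2*σ2))^2 - 4 * r ^ (2*σ) = a^2 * (1-u) := by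
      rw [hb, hd, hu_def]; ring
    set w := Real.sqrt (1-u) with hw_def
    have hw2 : w^2 = 1-u := Real.sq_sqrt h1u.le
    have hw0 : 0 ≤ w := Real.sqrt_nonneg _
    have hsqrt : Real.sqrt ((a + r ^ (2*σ2))^2 - 4 * r ^ (2*σ)) = a * w := by
      rw [hD, Real.sqrt_mul (sq_nonneg a), Real.sqrt_sq ha.le]
    have hfrac : a / (a * w) = 1/w := by
      rw [div_mul_eq_div_div, div_self ha.ne']
    rw [hsqrt, hfrac]
    exact key1 s u w hs hs8 hu_lb hu_ub hw2 hw0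
  · -- Case 2 : σ1 + σ2 < σ
    intro hlt
    obtain ⟨ε1, hε1, hε1le, hQ1⟩ := rpow_small (2*(σ-σ1-σ2)) (1/8) (by linarith) (by norm_num)
    refine ⟨1/4, 3/2, ε1, by norm_num, by norm_num, hε1, ?_⟩
    intro r hr hrε
    have hrle1 : r ≤ 1 := hrε.trans hε1le
    set a := r ^ (2*σ1) with ha_def
    set s := r ^ (2*(σ-2*σ1)) with hs_def
    set t := r ^ (2*(σ2-σ1)) with ht_def
    have ha : 0 < a := Real.rpow_pos_of_pos hr _
    have hs : 0 < s := Real.rpow_pos_of_pos hr _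
    have ht : 0 < t := Real.rpow_pos_of_pos hr _
    have ht1 : t ≤ 1 := Real.rpow_le_one hr.le hrle1 (by linarith)
    have hst : s ≤ t/8 := by
      have h' : s = t * r ^ (2*(σ-σ1-σ2)) := by
        rw [ht_def, hs_def, ← Real.rpow_add hr]; ring_nf
      have h'' := mul_le_mul_of_nonneg_left (hQ1 r hr hrε) ht.le
      rw [h']; linarith
    have ht2 : t^2 ≤ t := by
      calc t^2 = t*t := sq t
        _ ≤ t*1 := mul_le_mul_of_nonneg_left ht1 ht.le
        _ = t := mul_one t
    set v := 2*t + t^2 - 4*s with hv_def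
    have hv_lb : 3*t/2 ≤ v := by rw [hv_def]; nlinarith [sq_nonneg t]
    have hv_ub : v ≤ 3*t := by rw [hv_def]; linarith
    have h1v : (0:ℝ) < 1 + v := by linarith
    have hb : r ^ (2*σ2) = a * t := by
      rw [ha_def, ht_def, ← Real.rpow_add hr]; ring_nf
    have hd : r ^ (2*σ) = a^2 * s := by
      rw [ha_def, hs_def, sq, ← Real.rpow_add hr, ← Real.rpow_add hr]; ring_nf
    have hD : (a + r ^ (2*σ2))^2 - 4 * r ^ (2*σ) = a^2 * (1+v) := by
      rw [hb, hd, hv_def]; ring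
    set w := Real.sqrt (1+v) with hw_def
    have hw2 : w^2 = 1+v := Real.sq_sqrt h1v.le
    have hw0 : 0 ≤ w := Real.sqrt_nonneg _
    have hsqrt : Real.sqrt ((a + r ^ (2*σ2))^2 - 4 * r ^ (2*σ)) = a * w := by
      rw [hD, Real.sqrt_mul (sq_nonneg a), Real.sqrt_sq ha.le]
    have hfrac : a / (a * w) = 1/w := by
      rw [div_mul_eq_div_div, div_self ha.ne']
    rw [hsqrt, hfrac]
    exact key2 t v w ht ht1 hv_lb hv_ub hw2 hw0
end
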